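/- arXiv:2601.06808 — 5 statements merged into one kernel-verified Lean document; each statement's English description precedes it below -/
import Mathlib

section
/- Let λ > 0 and let μ be a probability measure on [0,∞) whose Laplace transform satisfies ∫_0^∞ e^{−w s} dμ(s) = exp(−∫_0^T w^{α(s)} ds) for every w ≥ 0 (the law at time T of the variable-order stable subordinator). Define the probability measure ν on ℕ by ν({m}) = ∫_0^∞ e^{−λ s}(λ s)^m/m! dμ(s). Then for every u ∈ [0,1], ∑_{m=0}^∞ u^m ν({m}) = exp(−∫_0^T (λ(1−u))^{α(s)} ds) = ∏_{k=1}^n exp(−λ^{α_k}(1−u)^{α_k}(t_k − t_{k−1})). (Probability generating function of the GSFPP-VO.) -/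
/-!
Conditionally on the subordinator value `s`, the GSFPP-VO is Poisson with mean `λ s`, whose
generating function is `exp (-λ (1 - u) s)`. Integrating against `μ` (the interchange is dominated
convergence with the nonnegative terms themselves as bound) turns the pgf of `ν` into the Laplace
transform of `μ` at `w = λ (1 - u)`. Since `α` is constant on each `[t_{k-1}, t_k)`, the exponent
`∫_0^T w^{α(s)} ds` splits into `∑_k w^{α_k} (t_k - t_{k-1})`, and `w^{α_k} = λ^{α_k} (1-u)^{α_k}`.
-/

open MeasureTheory Set Real

theorem hasSum_pow_mul_exp_neg_mul_pow_div_factorial (u x : ℝ) :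
    HasSum (fun m : ℕ => u ^ m * (exp (-x) * x ^ m / m.factorial)) (exp (-((1 - u) * x))) := by
  have h := (NormedSpace.expSeries_div_hasSum_exp (u * x)).mul_left (exp (-x))
  rw [← Real.exp_eq_exp_ℝ, ← Real.exp_add, show -x + u * x = -((1 - u) * x) by ring] at h
  simpa only [mul_pow, mul_div_assoc, mul_left_comm] using h

theorem hasSum_integral_of_nonneg {α : Type*} [MeasurableSpace α] {μ : Measure α}
    {F : ℕ → α → ℝ} {f : α → ℝ} (hF_meas : ∀ n, AEStronglyMeasurable (F n) μ)
    (hF_nonneg : ∀ n, 0 ≤ᵐ[μ] F n) (hf : Integrable f μ)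
    (h_lim : ∀ᵐ a ∂μ, HasSum (fun n => F n a) (f a)) :
    HasSum (fun n => ∫ a, F n a ∂μ) (∫ a, f a ∂μ) := by
  refine hasSum_integral_of_dominated_convergence F hF_meas (fun n => ?_)
    (h_lim.mono fun a ha => ha.summable) ?_ h_lim
  · filter_upwards [hF_nonneg n] with a ha using (Real.norm_of_nonneg ha).le
  · exact hf.congr (h_lim.mono fun a ha => ha.tsum_eq.symm)

theorem hasSum_pow_mul_integral_exp_neg_mul_pow_div_factorial {μ : Measure ℝ} [IsFiniteMeasure μ]
    (hμ : ∀ᵐ s ∂μ, 0 ≤ s) {l u : ℝ} (hl : 0 ≤ l) (hu₀ : 0 ≤ u) (hu₁ : u ≤ 1) :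
    HasSum (fun m : ℕ => u ^ m * ∫ s, exp (-(l * s)) * (l * s) ^ m / m.factorial ∂μ)
      (∫ s, exp (-(l * (1 - u) * s)) ∂μ) := by
  simp_rw [← integral_const_mul]
  refine hasSum_integral_of_nonneg (fun m => by fun_prop) (fun m => ?_) ?_ ?_
  · filter_upwards [hμ] with s hs using by positivity
  · refine Integrable.of_bound (by fun_prop) 1 ?_
    filter_upwards [hμ] with s hs
    rw [Real.norm_of_nonneg (exp_nonneg _), exp_le_one_iff, neg_nonpos]
    exact mul_nonneg (mul_nonneg hl (by linarith)) hs
  · refine Filter.Eventually.of_forall fun s => ?_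
    have h := hasSum_pow_mul_exp_neg_mul_pow_div_factorial u (l * s)
    rwa [show (1 - u) * (l * s) = l * (1 - u) * s by ring] at h

theorem intervalIntegral_eq_mul_of_eqOn_Ioo {f : ℝ → ℝ} {a b c : ℝ} (hab : a ≤ b)
    (hf : EqOn f (fun _ => c) (Ioo a b)) :
    IntervalIntegrable f volume a b ∧ ∫ s in a..b, f s = c * (b - a) := by
  refine ⟨?_, ?_⟩
  · rw [intervalIntegrable_iff_integrableOn_Ioo_of_le hab]
    exact (integrableOn_const measure_Ioo_lt_top.ne).congr_fun hf.symm measurableSet_Ioo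
  · rw [intervalIntegral.integral_of_le hab, integral_Ioc_eq_integral_Ioo,
      setIntegral_congr_fun measurableSet_Ioo hf, setIntegral_const,
      Real.volume_real_Ioo_of_le hab, smul_eq_mul, mul_comm]

theorem intervalIntegral_eq_sum_of_eqOn_Ioo {f : ℝ → ℝ} {t c : ℕ → ℝ} {n : ℕ}
    (ht : ∀ k < n, t k ≤ t (k + 1))
    (hf : ∀ k < n, EqOn f (fun _ => c k) (Ioo (t k) (t (k + 1)))) :
    ∫ s in t 0..t n, f s = ∑ k ∈ Finset.range n, c k * (t (k + 1) - t k) := by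
  have hpiece k (hk : k < n) := intervalIntegral_eq_mul_of_eqOn_Ioo (ht k hk) (hf k hk)
  rw [← intervalIntegral.sum_integral_adjacent_intervals fun k hk => (hpiece k hk).1]
  exact Finset.sum_congr rfl fun k hk => (hpiece k (Finset.mem_range.1 hk)).2

theorem gsfppvo_pgf_general
    (n : ℕ) (t : ℕ → ℝ) (T : ℝ)
    (ht0 : t 0 = 0) (htn : t n = T)
    (htmono : ∀ k < n, t k < t (k + 1))
    (α : ℕ → ℝ)
    (A : ℝ → ℝ)
    (hA : ∀ k, 1 ≤ k → k ≤ n → ∀ s ∈ Set.Ico (t (k - 1)) (t k), A s = α k)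
    (l : ℝ) (hl : 0 < l)
    (μ : Measure ℝ) [IsProbabilityMeasure μ] (hμ : μ (Set.Iio 0) = 0)
    (hLaplace : ∀ w : ℝ, 0 ≤ w →
      ∫ s, Real.exp (-(w * s)) ∂μ = Real.exp (-∫ s in (0 : ℝ)..T, w ^ A s))
    (ν : Measure ℕ)
    (hν : ∀ m : ℕ,
      ν {m} = ENNReal.ofReal
        (∫ s, Real.exp (-(l * s)) * (l * s) ^ m / (m.factorial : ℝ) ∂μ)) :
    ∀ u ∈ Set.Icc (0 : ℝ) 1,
      ∑' m : ℕ, u ^ m * (ν {m}).toReal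
          = Real.exp (-∫ s in (0 : ℝ)..T, (l * (1 - u)) ^ A s) ∧
        Real.exp (-∫ s in (0 : ℝ)..T, (l * (1 - u)) ^ A s)
          = ∏ k ∈ Finset.Icc 1 n,
              Real.exp (-(l ^ α k * (1 - u) ^ α k * (t k - t (k - 1)))) := by
  rintro u ⟨hu₀, hu₁⟩
  have hμ_nonneg : ∀ᵐ s ∂μ, 0 ≤ s :=
    (measure_eq_zero_iff_ae_notMem.1 hμ).mono fun s hs => not_lt.1 hs
  have hν_real m : (ν {m}).toReal = ∫ s, exp (-(l * s)) * (l * s) ^ m / m.factorial ∂μ := by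
    refine hν m ▸ ENNReal.toReal_ofReal (integral_nonneg_of_ae ?_)
    filter_upwards [hμ_nonneg] with s hs using by positivity
  have hexponent : ∫ s in (0 : ℝ)..T, (l * (1 - u)) ^ A s
      = ∑ k ∈ Finset.range n, (l * (1 - u)) ^ α (k + 1) * (t (k + 1) - t k) := by
    rw [← ht0, ← htn]
    refine intervalIntegral_eq_sum_of_eqOn_Ioo (fun k hk => (htmono k hk).le) fun k hk s hs => ?_
    exact congrArg ((l * (1 - u)) ^ ·)
      (hA (k + 1) (Nat.le_add_left 1 k) hk s (by simpa using Ioo_subset_Ico_self hs))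
  refine ⟨?_, ?_⟩
  · simp_rw [hν_real, ← hLaplace _ (mul_nonneg hl.le (sub_nonneg.2 hu₁))]
    exact (hasSum_pow_mul_integral_exp_neg_mul_pow_div_factorial hμ_nonneg hl.le hu₀ hu₁).tsum_eq
  · rw [hexponent, ← Finset.sum_neg_distrib, exp_sum, Finset.range_eq_Ico,
      ← Finset.Ico_add_one_right_eq_Icc, ← Finset.prod_Ico_add' _ 0 n 1]
    refine Finset.prod_congr rfl fun k _ => ?_
    rw [mul_rpow hl.le (sub_nonneg.2 hu₁), Nat.add_sub_cancel]

/-- if `μ` (the law at time `T` of the variable-order stable subordinator)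
has Laplace transform `∫ e^{-ws} dμ(s) = exp(-∫_0^T w^{α(s)} ds)` for all `w ≥ 0`, and
`ν {m} = ∫ e^{-λ s}(λ s)^m/m! dμ(s)`, then for every `u ∈ [0,1]` the pgf of `ν` equals
`exp(-∫_0^T (λ(1-u))^{α(s)} ds) = ∏_{k=1}^n exp(-λ^{α_k}(1-u)^{α_k}(t_k - t_{k-1}))`.
(Probability generating function of the GSFPP-VO.) -/
theorem gsfppvo_pgf
    (n : ℕ) (hn : 1 ≤ n) (t : ℕ → ℝ) (T : ℝ)
    (ht0 : t 0 = 0) (htn : t n = T)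
    (htmono : ∀ k < n, t k < t (k + 1))
    (α : ℕ → ℝ) (hα : ∀ k, 1 ≤ k → k ≤ n → α k ∈ Set.Ioo (0 : ℝ) 1)
    (A : ℝ → ℝ)
    (hA : ∀ k, 1 ≤ k → k ≤ n → ∀ s ∈ Set.Ico (t (k - 1)) (t k), A s = α k)
    (l : ℝ) (hl : 0 < l)
    (μ : Measure ℝ) [IsProbabilityMeasure μ] (hμ : μ (Set.Iio 0) = 0)
    (hLaplace : ∀ w : ℝ, 0 ≤ w →
      ∫ s, Real.exp (-(w * s)) ∂μ = Real.exp (-∫ s in (0 : ℝ)..T, w ^ A s))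
    (ν : Measure ℕ)
    (hν : ∀ m : ℕ,
      ν {m} = ENNReal.ofReal
        (∫ s, Real.exp (-(l * s)) * (l * s) ^ m / (m.factorial : ℝ) ∂μ)) :
    ∀ u ∈ Set.Icc (0 : ℝ) 1,
      ∑' m : ℕ, u ^ m * (ν {m}).toReal
          = Real.exp (-∫ s in (0 : ℝ)..T, (l * (1 - u)) ^ A s) ∧
        Real.exp (-∫ s in (0 : ℝ)..T, (l * (1 - u)) ^ A s)
          = ∏ k ∈ Finset.Icc 1 n,
              Real.exp (-(l ^ α k * (1 - u) ^ α k * (t k - t (k - 1)))) :=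
  gsfppvo_pgf_general n t T ht0 htn htmono α A hA l hl μ hμ hLaplace ν hν
end

section
/- Let Y_1, …, Y_n be independent ℕ-valued random variables on a probability space such that E[u^{Y_k}] = exp(−λ^{α_k}(1−u)^{α_k}(t_k − t_{k−1})) for every u ∈ [0,1) and every k (i.e., Y_k is a space-fractional Poisson variable of index α_k over the k-th subinterval), and let Y be an ℕ-valued random variable with E[u^Y] = exp(−∫_0^T (λ(1−u))^{α(s)} ds) for every u ∈ [0,1). Then Y and Y_1 + ⋯ + Y_n have the same distribution. -/
/-!
Both random variables are `ℕ`-valued, so their laws are determined by their probability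
generating functions on `(0, 1)`: such a function is a power series with bounded coefficients,
hence analytic at `0`, and by the principle of isolated zeros two of them agreeing on `(0, 1)` have
the same coefficients. Since `α` is constant on each `[t_{k-1}, t_k)`, the exponent in the
generating function of `Y` splits as `∑ λ^{α_k} (1 - u)^{α_k} (t_k - t_{k-1})`, so that function is
the product of the generating functions of the `Y_k`, which by independence is the generating
function of their sum.
-/

open Filter Topology Set MeasureTheory ProbabilityTheory FormalMultilinearSeries

section PowerSeries

variable {𝕜 : Type*} [NontriviallyNormedField 𝕜] [CompleteSpace 𝕜]

theorem hasFPowerSeriesAt_tsum_mul_pow_of_norm_le {a : ℕ → 𝕜} {C : ℝ} (ha : ∀ n, ‖a n‖ ≤ C) :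
    HasFPowerSeriesAt (fun z => ∑' n, a n * z ^ n) (ofScalars 𝕜 a) 0 := by
  have hradius : 1 ≤ (ofScalars 𝕜 a).radius := by
    simpa using (ofScalars 𝕜 a).le_radius_of_bound C (r := 1) fun n => by simpa using ha n
  have hsum :=
    ((ofScalars 𝕜 a).hasFPowerSeriesOnBall (zero_lt_one.trans_le hradius)).hasFPowerSeriesAt
  change HasFPowerSeriesAt (ofScalarsSum a) _ _ at hsum
  simpa [ofScalarsSum_eq_tsum] using hsum

theorem eq_of_frequently_tsum_mul_pow_eq {c d : ℕ → 𝕜} {C D : ℝ}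
    (hc : ∀ n, ‖c n‖ ≤ C) (hd : ∀ n, ‖d n‖ ≤ D)
    (h : ∃ᶠ z in 𝓝[≠] 0, ∑' n, c n * z ^ n = ∑' n, d n * z ^ n) : c = d := by
  have hcs := hasFPowerSeriesAt_tsum_mul_pow_of_norm_le hc
  have hds := hasFPowerSeriesAt_tsum_mul_pow_of_norm_le hd
  rw [AnalyticAt.frequently_eq_iff_eventually_eq hcs.analyticAt hds.analyticAt] at h
  exact ofScalars_series_injective 𝕜 𝕜 (hcs.eq_formalMultilinearSeries_of_eventually hds h)

end PowerSeries

theorem integral_pow_eq_tsum (μ : Measure ℕ) [IsFiniteMeasure μ] {u : ℝ} (hu : |u| ≤ 1) :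
    ∫ k, u ^ k ∂μ = ∑' k, μ.real {k} * u ^ k := by
  have hint : Integrable (fun k : ℕ => u ^ k) μ :=
    .of_bound measurable_from_top.aestronglyMeasurable 1
      (.of_forall fun k => by simpa using pow_le_one₀ (abs_nonneg u) hu)
  simpa using integral_countable hint

theorem MeasureTheory.Measure.ext_of_integral_pow_eq {μ ν : Measure ℕ} [IsFiniteMeasure μ]
    [IsFiniteMeasure ν] (h : ∀ u ∈ Ioo (0 : ℝ) 1, ∫ k, u ^ k ∂μ = ∫ k, u ^ k ∂ν) : μ = ν := by
  have hbound (κ : Measure ℕ) [IsFiniteMeasure κ] (k : ℕ) : ‖κ.real {k}‖ ≤ κ.real univ := by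
    rw [Real.norm_of_nonneg measureReal_nonneg]
    exact measureReal_mono (subset_univ {k})
  have hfreq : ∃ᶠ u in 𝓝[≠] (0 : ℝ),
      ∑' k, μ.real {k} * u ^ k = ∑' k, ν.real {k} * u ^ k := by
    refine Eventually.frequently ?_ |>.filter_mono (nhdsGT_le_nhdsNE 0)
    filter_upwards [Ioo_mem_nhdsGT zero_lt_one] with u hu
    have hu' : |u| ≤ 1 := abs_le.2 ⟨by linarith [hu.1], hu.2.le⟩
    rw [← integral_pow_eq_tsum μ hu', ← integral_pow_eq_tsum ν hu', h u hu]
  exact ext_of_measureReal_singleton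
    (congrFun (eq_of_frequently_tsum_mul_pow_eq (hbound μ) (hbound ν) hfreq))

theorem ProbabilityTheory.iIndepFun.integral_pow_sum {Ω ι 𝕜 : Type*} [MeasurableSpace Ω]
    [Fintype ι] [RCLike 𝕜] {P : Measure Ω} {X : ι → Ω → ℕ} (hX : iIndepFun X P)
    (mX : ∀ i, AEMeasurable (X i) P) (u : 𝕜) :
    ∫ ω, u ^ (∑ i, X i ω) ∂P = ∏ i, ∫ ω, u ^ X i ω ∂P := by
  simp_rw [← Finset.prod_pow_eq_pow_sum]
  exact hX.integral_fun_prod_comp mX fun _ => measurable_from_top.aestronglyMeasurable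

theorem intervalIntegral.integral_eq_sum_of_eqOn_uIoo {E : Type*} [NormedAddCommGroup E]
    [NormedSpace ℝ E] [CompleteSpace E] {f : ℝ → E} {t : ℕ → ℝ} {c : ℕ → E} {n : ℕ}
    (h : ∀ k < n, EqOn f (fun _ => c k) (uIoo (t k) (t (k + 1)))) :
    ∫ x in t 0..t n, f x = ∑ k ∈ Finset.range n, (t (k + 1) - t k) • c k := by
  rw [← sum_integral_adjacent_intervals fun k hk =>
    intervalIntegrable_const.congr_uIoo (h k hk).symm]
  refine Finset.sum_congr rfl fun k hk => ?_
  rw [integral_congr_uIoo (h k (Finset.mem_range.1 hk)), integral_const]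

theorem gsfppvo_eq_sum_in_distribution_general
    (n : ℕ) (t : ℕ → ℝ) (T : ℝ)
    (ht0 : t 0 = 0) (htn : t n = T)
    (htmono : ∀ k < n, t k < t (k + 1))
    (α : ℕ → ℝ)
    (A : ℝ → ℝ)
    (hA : ∀ k, 1 ≤ k → k ≤ n → ∀ s ∈ Set.Ico (t (k - 1)) (t k), A s = α k)
    (l : ℝ) (hl : 0 < l)
    {Ω : Type*} [MeasurableSpace Ω] (P : Measure Ω) [IsProbabilityMeasure P]
    (Y : Fin n → Ω → ℕ) (hYmeas : ∀ k, Measurable (Y k))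
    (hindep : ProbabilityTheory.iIndepFun Y P)
    (hYpgf : ∀ u ∈ Set.Ico (0 : ℝ) 1, ∀ k : Fin n,
      ∫ ω, u ^ Y k ω ∂P
        = Real.exp (-(l ^ α ((k : ℕ) + 1) * (1 - u) ^ α ((k : ℕ) + 1) *
            (t ((k : ℕ) + 1) - t (k : ℕ)))))
    (Z : Ω → ℕ) (hZmeas : Measurable Z)
    (hZpgf : ∀ u ∈ Set.Ico (0 : ℝ) 1,
      ∫ ω, u ^ Z ω ∂P = Real.exp (-∫ s in (0 : ℝ)..T, (l * (1 - u)) ^ A s)) :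
    Measure.map Z P = Measure.map (fun ω => ∑ k : Fin n, Y k ω) P := by
  have hSmeas : Measurable fun ω => ∑ k : Fin n, Y k ω :=
    Finset.measurable_sum _ fun k _ => hYmeas k
  refine Measure.ext_of_integral_pow_eq fun u hu => ?_
  have hu' : u ∈ Ico (0 : ℝ) 1 := Ioo_subset_Ico_self hu
  have hA_piece : ∀ k < n, EqOn (fun s => (l * (1 - u)) ^ A s)
      (fun _ => (l * (1 - u)) ^ α (k + 1)) (uIoo (t k) (t (k + 1))) := by
    intro k hk s hs
    rw [uIoo_of_le (htmono k hk).le] at hs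
    simp only [hA (k + 1) (Nat.le_add_left 1 k) hk s ⟨hs.1.le, hs.2⟩]
  rw [integral_map hZmeas.aemeasurable measurable_from_top.aestronglyMeasurable,
    integral_map hSmeas.aemeasurable measurable_from_top.aestronglyMeasurable,
    hindep.integral_pow_sum (fun k => (hYmeas k).aemeasurable), hZpgf u hu',
    Finset.prod_congr rfl fun k _ => hYpgf u hu' k, ← Real.exp_sum, ← ht0, ← htn,
    intervalIntegral.integral_eq_sum_of_eqOn_uIoo hA_piece, ← Finset.sum_neg_distrib,
    ← Fin.sum_univ_eq_sum_range]
  simp only [Real.mul_rpow hl.le (sub_pos.2 hu.2).le, smul_eq_mul, mul_comm]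

/-- if `Y_1, …, Y_n` are independent `ℕ`-valued random variables with
`E[u^{Y_k}] = exp(−λ^{α_k}(1−u)^{α_k}(t_k − t_{k−1}))` for all `u ∈ [0,1)` (space-fractional
Poisson variables over the subintervals), and `Y` is an `ℕ`-valued random variable with
`E[u^Y] = exp(−∫_0^T (λ(1−u))^{α(s)} ds)` for all `u ∈ [0,1)` (the GSFPP-VO at time `T`),
then `Y` and `Y_1 + ⋯ + Y_n` have the same distribution. -/
theorem gsfppvo_eq_sum_in_distribution
    (n : ℕ) (hn : 1 ≤ n) (t : ℕ → ℝ) (T : ℝ)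
    (ht0 : t 0 = 0) (htn : t n = T)
    (htmono : ∀ k < n, t k < t (k + 1))
    (α : ℕ → ℝ) (hα : ∀ k, 1 ≤ k → k ≤ n → α k ∈ Set.Ioo (0 : ℝ) 1)
    (A : ℝ → ℝ)
    (hA : ∀ k, 1 ≤ k → k ≤ n → ∀ s ∈ Set.Ico (t (k - 1)) (t k), A s = α k)
    (l : ℝ) (hl : 0 < l)
    {Ω : Type*} [MeasurableSpace Ω] (P : Measure Ω) [IsProbabilityMeasure P]
    (Y : Fin n → Ω → ℕ) (hYmeas : ∀ k, Measurable (Y k))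
    (hindep : ProbabilityTheory.iIndepFun Y P)
    (hYpgf : ∀ u ∈ Set.Ico (0 : ℝ) 1, ∀ k : Fin n,
      ∫ ω, u ^ Y k ω ∂P
        = Real.exp (-(l ^ α ((k : ℕ) + 1) * (1 - u) ^ α ((k : ℕ) + 1) *
            (t ((k : ℕ) + 1) - t (k : ℕ)))))
    (Z : Ω → ℕ) (hZmeas : Measurable Z)
    (hZpgf : ∀ u ∈ Set.Ico (0 : ℝ) 1,
      ∫ ω, u ^ Z ω ∂P = Real.exp (-∫ s in (0 : ℝ)..T, (l * (1 - u)) ^ A s)) :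
    Measure.map Z P = Measure.map (fun ω => ∑ k : Fin n, Y k ω) P :=
  gsfppvo_eq_sum_in_distribution_general n t T ht0 htn htmono α A hA l hl P Y hYmeas hindep hYpgf Z
    hZmeas hZpgf
end

section
/- The sequence (a_m)_{m≥0} is summable and ∑_{m=0}^∞ a_m = 1; that is, the pmf of the GSFPP-VO sums to one. -/
/-!
Since `(s)_m / m! = (s choose m)`, summing `a_m` over `m` before `r` turns every summand into the
binomial series `∑ₘ (-1)^m (s choose m) = (1 - 1)^s` with `s = ∑ₖ αₖ xₖ ≥ 0`; it converges and
vanishes unless `s = 0`, i.e. unless `x = 0`, so only the term `r = 0`, which equals `1`, survives.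
The interchange of the two sums is justified by absolute convergence: Pascal's rule gives
`∑ₘ |(s choose m)| ≤ 2^k` for `0 ≤ s ≤ k`, and with `αₖ ≤ 1` the multinomial theorem bounds the
`r`-th row by `(2 max(1, |λ|) ∑ₖ |tₖ - tₖ₋₁|)^r / r!`.
-/

/-- The falling factorial `(β)_m = β(β−1)⋯(β−m+1)`, with `(β)_0 = 1`. -/
noncomputable def fallingFactorial (b : ℝ) : ℕ → ℝ
  | 0 => 1
  | m + 1 => fallingFactorial b m * (b - m)

/-- The pmf of the GSFPP-VO:
`a_m = ((−1)^m/m!) ∑_{r=0}^∞ ((−1)^r/r!) ∑_{x_1+⋯+x_n=r} (r!/(x_1!⋯x_n!))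
  λ^{α_1x_1+⋯+α_nx_n} (α_1x_1+⋯+α_nx_n)_m ∏_{k=1}^n (t_k − t_{k−1})^{x_k}`. -/
noncomputable def gsfppPmf (n : ℕ) (t : ℕ → ℝ) (α : ℕ → ℝ) (l : ℝ) (m : ℕ) : ℝ :=
  ((-1 : ℝ) ^ m / (m.factorial : ℝ)) *
    ∑' r : ℕ, ((-1 : ℝ) ^ r / (r.factorial : ℝ)) *
      ∑ x ∈ Finset.Nat.antidiagonalTuple n r,
        ((r.factorial : ℝ) / ∏ i : Fin n, ((x i).factorial : ℝ)) *
          l ^ (∑ i : Fin n, α ((i : ℕ) + 1) * (x i : ℝ)) *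
          fallingFactorial (∑ i : Fin n, α ((i : ℕ) + 1) * (x i : ℝ)) m *
          ∏ i : Fin n, (t ((i : ℕ) + 1) - t (i : ℕ)) ^ (x i)

open Finset Filter Topology Ring

section BinomialRing

variable {R : Type*} [CommRing R] [BinomialRing R]

theorem succ_mul_choose_succ (r : R) (m : ℕ) :
    (m + 1 : R) * choose r (m + 1) = (r - m) * choose r m := by
  have h := choose_smul_choose r (Nat.le_add_right m 1)
  rw [Nat.choose_succ_self_right, Nat.add_sub_cancel_left, choose_one_right, nsmul_eq_mul] at h
  push_cast at h
  rw [h, mul_comm]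

theorem succ_mul_choose_succ_eq_mul_choose_sub_one (r : R) (m : ℕ) :
    (m + 1 : R) * choose r (m + 1) = r * choose (r - 1) m := by
  have h := choose_smul_choose r (Nat.le_add_left 1 m)
  rw [Nat.choose_one_right, Nat.add_sub_cancel, choose_one_right, nsmul_eq_mul] at h
  push_cast at h
  simpa [add_comm] using h

theorem sum_range_succ_neg_one_pow_mul_choose (r : R) (N : ℕ) :
    ∑ m ∈ range (N + 1), (-1) ^ m * choose r m = (-1) ^ N * choose (r - 1) N := by
  induction N with
  | zero => simp
  | succ N ih =>
    have pascal := choose_succ_succ (r - 1) N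
    rw [sub_add_cancel] at pascal
    rw [sum_range_succ, ih, pascal]
    ring

end BinomialRing

theorem fallingFactorial_eq_factorial_mul_choose (s : ℝ) (m : ℕ) :
    fallingFactorial s m = m.factorial * choose s m := by
  rw [← nsmul_eq_mul, ← Ring.descPochhammer_eq_factorial_smul_choose]
  induction m with
  | zero => simp [fallingFactorial]
  | succ m ih =>
    rw [fallingFactorial, ih, descPochhammer_succ_right, Polynomial.smeval_mul]
    simp [Polynomial.smeval_sub, Polynomial.smeval_X, Polynomial.smeval_natCast]

theorem summable_abs_choose_and_tsum_le_two_of_le_one {s : ℝ} (hs0 : 0 ≤ s) (hs1 : s ≤ 1) :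
    Summable (fun m => |choose s m|) ∧ ∑' m, |choose s m| ≤ 2 := by
  set q : ℕ → ℝ := fun N => (-1) ^ N * choose (s - 1) N with hq
  have hq_succ (N : ℕ) : (N + 1 : ℝ) * q (N + 1) = (N + 1 - s) * q N := by
    simp only [hq, pow_succ]
    linear_combination (-(-1 : ℝ) ^ N) * succ_mul_choose_succ (s - 1) N
  have hq_nonneg (N : ℕ) : 0 ≤ q N := by
    induction N with
    | zero => simp [hq]
    | succ N ih =>
      have := hq_succ N
      nlinarith [mul_nonneg (by linarith : (0 : ℝ) ≤ N + 1 - s) ih]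
  have hq_anti (N : ℕ) : q (N + 1) ≤ q N := by
    nlinarith [hq_succ N, hq_nonneg N, hq_nonneg (N + 1)]
  have habs (m : ℕ) : |choose s (m + 1)| = q m - q (m + 1) := by
    have h := sum_range_succ_neg_one_pow_mul_choose s (m + 1)
    rw [sum_range_succ, sum_range_succ_neg_one_pow_mul_choose] at h
    rw [← abs_of_nonneg (sub_nonneg.2 (hq_anti m))]
    simp only [hq]
    rw [← abs_neg, ← h]
    simp [abs_mul]
  have hpartial (N : ℕ) : ∑ m ∈ range N, |choose s m| ≤ 2 := by
    cases N with
    | zero => simp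
    | succ N =>
      rw [sum_range_succ', sum_congr rfl fun m _ => habs m, sum_range_sub', choose_zero_right,
        abs_one]
      have : q 0 = 1 := by simp [hq]
      linarith [hq_nonneg N]
  exact ⟨summable_of_sum_range_le (fun _ => abs_nonneg _) hpartial,
    Real.tsum_le_of_sum_range_le (fun _ => abs_nonneg _) hpartial⟩

theorem summable_abs_choose_add_one_and_tsum_le {s B : ℝ} (hs : Summable fun m => |choose s m|)
    (hB : ∑' m, |choose s m| ≤ B) :
    Summable (fun m => |choose (s + 1) m|) ∧ ∑' m, |choose (s + 1) m| ≤ 2 * B := by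
  have hshift : Summable fun m => |choose s (m + 1)| := (summable_nat_add_iff 1).2 hs
  have hpascal (m : ℕ) : |choose (s + 1) (m + 1)| ≤ |choose s m| + |choose s (m + 1)| := by
    rw [choose_succ_succ]
    exact abs_add_le _ _
  have hsucc : Summable fun m => |choose (s + 1) (m + 1)| :=
    (hs.add hshift).of_nonneg_of_le (fun _ => abs_nonneg _) hpascal
  have hsum : Summable fun m => |choose (s + 1) m| := (summable_nat_add_iff 1).1 hsucc
  refine ⟨hsum, ?_⟩
  have hle : ∑' m, |choose (s + 1) (m + 1)| ≤ ∑' m, |choose s m| + ∑' m, |choose s (m + 1)| := by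
    rw [← hs.tsum_add hshift]
    exact hsucc.tsum_le_tsum hpascal (hs.add hshift)
  have hT := hs.tsum_eq_zero_add
  have hT' := hsum.tsum_eq_zero_add
  simp only [choose_zero_right, abs_one] at hT hT'
  linarith

theorem summable_abs_choose_and_tsum_le {s : ℝ} (k : ℕ) (hs0 : 0 ≤ s) (hsk : s ≤ k) :
    Summable (fun m => |choose s m|) ∧ ∑' m, |choose s m| ≤ 2 ^ k := by
  induction k generalizing s with
  | zero =>
    obtain rfl : s = 0 := le_antisymm (by simpa using hsk) hs0
    have hzero (m : ℕ) : |choose (0 : ℝ) m| = if m = 0 then 1 else 0 := by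
      rw [choose_zero_ite]; split_ifs <;> simp
    simp only [hzero]
    exact ⟨(hasSum_ite_eq 0 1).summable, by rw [tsum_ite_eq]; simp⟩
  | succ k ih =>
    rcases le_or_gt s 1 with hs1 | hs1
    · obtain ⟨hsum, hle⟩ := summable_abs_choose_and_tsum_le_two_of_le_one hs0 hs1
      exact ⟨hsum, hle.trans (le_self_pow₀ one_le_two k.succ_ne_zero)⟩
    · obtain ⟨hsum, hle⟩ := ih (s := s - 1) (by linarith) (by push_cast at hsk; linarith)
      have := summable_abs_choose_add_one_and_tsum_le hsum hle
      rw [sub_add_cancel, ← pow_succ'] at this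
      exact this

theorem hasSum_neg_one_pow_mul_choose {s : ℝ} (hs : 0 ≤ s) :
    HasSum (fun m => (-1) ^ m * choose s m) (if s = 0 then 1 else 0) := by
  rcases hs.eq_or_lt with rfl | hs
  · simp only [choose_zero_ite, if_true]
    convert hasSum_ite_eq 0 (1 : ℝ) using 2 with m
    split_ifs <;> simp_all
  rw [if_neg hs.ne']
  have habs := (summable_abs_choose_and_tsum_le ⌈s⌉₊ hs.le (Nat.le_ceil s)).1
  have hsum : Summable fun m => (-1) ^ m * choose s m :=
    Summable.of_abs (by simpa [abs_mul] using habs)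
  set σ := ∑' m, (-1) ^ m * choose s m
  have hpartial : Tendsto (fun N => (-1) ^ N * choose (s - 1) N) atTop (𝓝 σ) := by
    have h := hsum.hasSum.tendsto_sum_nat.comp (tendsto_add_atTop_nat 1)
    simpa only [Function.comp_def, sum_range_succ_neg_one_pow_mul_choose] using h
  suffices σ = 0 by rw [← this]; exact hsum.hasSum
  by_contra hσ
  -- `|(s choose N+1)| = s |(s-1 choose N)| / (N+1)`, so a nonzero limit of the partial sums
  -- would make the terms comparable with the harmonic series.
  have hlarge : ∀ᶠ N in atTop, |σ| / 2 ≤ |(-1) ^ N * choose (s - 1) N| :=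
    hpartial.abs.eventually (le_mem_nhds (half_lt_self (abs_pos.2 hσ)))
  have hharm : Summable fun N : ℕ => ((N + 1 : ℕ) : ℝ)⁻¹ := by
    refine Summable.of_norm_bounded_eventually_nat
      (((summable_nat_add_iff 1).2 habs).mul_left (2 / (s * |σ|))) ?_
    filter_upwards [hlarge] with N hN
    have hrel := congrArg abs (succ_mul_choose_succ_eq_mul_choose_sub_one s N)
    rw [abs_mul, abs_mul, abs_of_pos hs, abs_of_pos (by positivity)] at hrel
    rw [abs_mul, abs_pow, abs_neg, abs_one, one_pow, one_mul] at hN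
    rw [Real.norm_eq_abs, abs_inv, Nat.abs_cast, inv_le_iff_one_le_mul₀ (by positivity)]
    push_cast
    calc (1 : ℝ) = 2 / (s * |σ|) * (s * (|σ| / 2)) := by field_simp
      _ ≤ 2 / (s * |σ|) * (s * |choose (s - 1) N|) := by gcongr
      _ = 2 / (s * |σ|) * |choose s (N + 1)| * (N + 1) := by rw [← hrel]; ring
  exact Real.not_summable_natCast_inv ((summable_nat_add_iff 1).1 hharm)

theorem summable_tsum_and_tsum_comm_of_summable_abs {β γ : Type*} {f : β → γ → ℝ}
    (hf : ∀ b, Summable fun c => |f b c|) (hsum : Summable fun b => ∑' c, |f b c|) :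
    Summable (fun c => ∑' b, f b c) ∧ ∑' c, ∑' b, f b c = ∑' b, ∑' c, f b c := by
  have habs : Summable fun p : β × γ => |f p.1 p.2| :=
    (summable_prod_of_nonneg fun _ => abs_nonneg _).2 ⟨hf, hsum⟩
  have h : Summable (Function.uncurry f) := habs.of_abs
  exact ⟨h.prod_symm.prod, h.tsum_comm⟩

theorem summable_abs_sum_mul_and_tsum_le {ι : Type*} (X : Finset ι) (c : ι → ℝ)
    {f : ι → ℕ → ℝ} {B : ℝ} (hf : ∀ x ∈ X, Summable fun m => |f x m|)
    (hB : ∀ x ∈ X, ∑' m, |f x m| ≤ B) :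
    Summable (fun m => |∑ x ∈ X, c x * f x m|) ∧
      ∑' m, |∑ x ∈ X, c x * f x m| ≤ (∑ x ∈ X, |c x|) * B := by
  have hmaj : Summable fun m => ∑ x ∈ X, |c x| * |f x m| :=
    summable_sum fun x hx => (hf x hx).mul_left _
  have hle (m : ℕ) : |∑ x ∈ X, c x * f x m| ≤ ∑ x ∈ X, |c x| * |f x m| :=
    (abs_sum_le_sum_abs _ _).trans_eq (by simp only [abs_mul])
  have hsum := hmaj.of_nonneg_of_le (fun _ => abs_nonneg _) hle
  refine ⟨hsum, (hsum.tsum_le_tsum hle hmaj).trans ?_⟩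
  rw [Summable.tsum_finsetSum fun x hx => (hf x hx).mul_left _, sum_mul]
  exact sum_le_sum fun x hx => by
    rw [tsum_mul_left]; exact mul_le_mul_of_nonneg_left (hB x hx) (abs_nonneg _)

theorem sum_antidiagonalTuple_factorial_div_mul_prod_pow {n : ℕ} (f : Fin n → ℝ) (r : ℕ) :
    ∑ x ∈ Nat.antidiagonalTuple n r,
        ((r.factorial : ℝ) / ∏ i, ((x i).factorial : ℝ)) * ∏ i, f i ^ x i = (∑ i, f i) ^ r := by
  rw [sum_pow_eq_sum_piAntidiag, piAntidiag_univ_fin_eq_antidiagonalTuple]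
  refine sum_congr rfl fun x hx => ?_
  have hspec := Nat.multinomial_spec univ x
  rw [(Nat.mem_antidiagonalTuple.1 hx)] at hspec
  rw [← hspec]
  push_cast
  rw [mul_div_cancel_left₀ _ (prod_ne_zero_iff.2 fun i _ => by positivity)]

theorem abs_rpow_le_max_one_abs_pow {l s : ℝ} {r : ℕ} (hs0 : 0 ≤ s) (hsr : s ≤ r) :
    |l ^ s| ≤ max 1 |l| ^ r :=
  calc |l ^ s| ≤ |l| ^ s := Real.abs_rpow_le_abs_rpow l s
    _ ≤ max 1 |l| ^ s := Real.rpow_le_rpow (abs_nonneg l) (le_max_right 1 |l|) hs0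
    _ ≤ max 1 |l| ^ (r : ℝ) := Real.rpow_le_rpow_of_exponent_le (le_max_left 1 |l|) hsr
    _ = max 1 |l| ^ r := Real.rpow_natCast _ r

section GSFPP

variable {n : ℕ}

noncomputable def weightedDegree (α : ℕ → ℝ) (x : Fin n → ℕ) : ℝ :=
  ∑ i : Fin n, α ((i : ℕ) + 1) * (x i : ℝ)

theorem weightedDegree_nonneg {α : ℕ → ℝ} (hα : ∀ i : Fin n, 0 ≤ α ((i : ℕ) + 1))
    (x : Fin n → ℕ) : 0 ≤ weightedDegree α x :=
  sum_nonneg fun i _ => mul_nonneg (hα i) (Nat.cast_nonneg _)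

theorem weightedDegree_le {α : ℕ → ℝ} (hα : ∀ i : Fin n, α ((i : ℕ) + 1) ≤ 1)
    {r : ℕ} {x : Fin n → ℕ} (hx : x ∈ Nat.antidiagonalTuple n r) : weightedDegree α x ≤ r := by
  rw [← Nat.mem_antidiagonalTuple.1 hx, Nat.cast_sum]
  exact sum_le_sum fun i _ => mul_le_of_le_one_left (Nat.cast_nonneg _) (hα i)

theorem weightedDegree_eq_zero_iff {α : ℕ → ℝ} (hα : ∀ i : Fin n, 0 < α ((i : ℕ) + 1))
    {x : Fin n → ℕ} : weightedDegree α x = 0 ↔ x = 0 := by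
  rw [weightedDegree, sum_eq_zero_iff_of_nonneg fun i _ => by have := hα i; positivity,
    funext_iff]
  simp [(hα _).ne']

noncomputable def gsfppCoeff (n : ℕ) (t α : ℕ → ℝ) (l : ℝ) (r : ℕ) (x : Fin n → ℕ) : ℝ :=
  (-1) ^ r / r.factorial * ((r.factorial / ∏ i : Fin n, ((x i).factorial : ℝ)) *
    l ^ weightedDegree α x * ∏ i : Fin n, (t ((i : ℕ) + 1) - t (i : ℕ)) ^ (x i))

noncomputable def gsfppTerm (n : ℕ) (t α : ℕ → ℝ) (l : ℝ) (r m : ℕ) : ℝ :=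
  ∑ x ∈ Nat.antidiagonalTuple n r,
    gsfppCoeff n t α l r x * ((-1) ^ m * choose (weightedDegree α x) m)

theorem gsfppPmf_eq_tsum_gsfppTerm (t α : ℕ → ℝ) (l : ℝ) (m : ℕ) :
    gsfppPmf n t α l m = ∑' r, gsfppTerm n t α l r m := by
  rw [gsfppPmf, ← tsum_mul_left]
  refine tsum_congr fun r => ?_
  rw [mul_sum, mul_sum, gsfppTerm]
  refine sum_congr rfl fun x _ => ?_
  rw [gsfppCoeff, weightedDegree, fallingFactorial_eq_factorial_mul_choose]
  field_simp

theorem hasSum_gsfppTerm (t : ℕ → ℝ) {α : ℕ → ℝ} (hα : ∀ i : Fin n, 0 < α ((i : ℕ) + 1))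
    (l : ℝ) (r : ℕ) : HasSum (gsfppTerm n t α l r) (if r = 0 then 1 else 0) := by
  have h := hasSum_sum fun x (_ : x ∈ Nat.antidiagonalTuple n r) =>
    (hasSum_neg_one_pow_mul_choose (weightedDegree_nonneg (fun i => (hα i).le) x)).mul_left
      (gsfppCoeff n t α l r x)
  have hvalue : (∑ x ∈ Nat.antidiagonalTuple n r,
      gsfppCoeff n t α l r x * if weightedDegree α x = 0 then 1 else 0) =
      if r = 0 then 1 else 0 := by
    simp only [weightedDegree_eq_zero_iff hα, mul_ite, mul_one, mul_zero, sum_ite_eq']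
    rcases eq_or_ne r 0 with rfl | hr
    · simp [gsfppCoeff, weightedDegree, Nat.mem_antidiagonalTuple]
    · simp [hr, hr.symm, Nat.mem_antidiagonalTuple]
  exact hvalue ▸ h

theorem sum_abs_gsfppCoeff_le (t : ℕ → ℝ) {α : ℕ → ℝ} (hα0 : ∀ i : Fin n, 0 ≤ α ((i : ℕ) + 1))
    (hα1 : ∀ i : Fin n, α ((i : ℕ) + 1) ≤ 1) (l : ℝ) (r : ℕ) :
    ∑ x ∈ Nat.antidiagonalTuple n r, |gsfppCoeff n t α l r x| ≤
      (max 1 |l| * ∑ i : Fin n, |t ((i : ℕ) + 1) - t (i : ℕ)|) ^ r / r.factorial := by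
  set A : (Fin n → ℕ) → ℝ := fun x => (r.factorial / ∏ i : Fin n, ((x i).factorial : ℝ)) *
    ∏ i : Fin n, |t ((i : ℕ) + 1) - t (i : ℕ)| ^ (x i) with hA
  calc ∑ x ∈ Nat.antidiagonalTuple n r, |gsfppCoeff n t α l r x|
      ≤ ∑ x ∈ Nat.antidiagonalTuple n r, A x * max 1 |l| ^ r / r.factorial := by
        refine sum_le_sum fun x hx => ?_
        have hl := abs_rpow_le_max_one_abs_pow (l := l) (weightedDegree_nonneg hα0 x)
          (weightedDegree_le hα1 hx)
        have habs : |gsfppCoeff n t α l r x| = A x * |l ^ weightedDegree α x| / r.factorial := by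
          simp only [A, gsfppCoeff, abs_mul, abs_div, abs_prod, abs_pow, abs_neg, abs_one,
            one_pow, Nat.abs_cast]
          ring
        rw [habs]
        gcongr
    _ = _ := by
      rw [← sum_div, ← sum_mul, hA, sum_antidiagonalTuple_factorial_div_mul_prod_pow, mul_pow,
        mul_comm]

theorem summable_abs_gsfppTerm_and_tsum_le (t : ℕ → ℝ) {α : ℕ → ℝ}
    (hα0 : ∀ i : Fin n, 0 ≤ α ((i : ℕ) + 1)) (hα1 : ∀ i : Fin n, α ((i : ℕ) + 1) ≤ 1) (l : ℝ)
    (r : ℕ) :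
    Summable (fun m => |gsfppTerm n t α l r m|) ∧ ∑' m, |gsfppTerm n t α l r m| ≤
      (2 * max 1 |l| * ∑ i : Fin n, |t ((i : ℕ) + 1) - t (i : ℕ)|) ^ r / r.factorial := by
  have hchoose (x) (hx : x ∈ Nat.antidiagonalTuple n r) :=
    summable_abs_choose_and_tsum_le r (weightedDegree_nonneg hα0 x) (weightedDegree_le hα1 hx)
  obtain ⟨hsum, hle⟩ := summable_abs_sum_mul_and_tsum_le (Nat.antidiagonalTuple n r)
    (gsfppCoeff n t α l r) (f := fun x m => (-1) ^ m * choose (weightedDegree α x) m) (B := 2 ^ r)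
    (fun x hx => by simpa [abs_mul] using (hchoose x hx).1)
    (fun x hx => by simpa [abs_mul] using (hchoose x hx).2)
  refine ⟨hsum, hle.trans ?_⟩
  rw [mul_assoc, mul_pow, mul_div_assoc, mul_comm (2 ^ r)]
  exact mul_le_mul_of_nonneg_right (sum_abs_gsfppCoeff_le t hα0 hα1 l r) (by positivity)

end GSFPP

theorem gsfppvo_pmf_sums_to_one_general
    (n : ℕ) (t : ℕ → ℝ)
    (α : ℕ → ℝ) (hα : ∀ k, 1 ≤ k → k ≤ n → α k ∈ Set.Ioo (0 : ℝ) 1)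
    (l : ℝ) :
    Summable (fun m : ℕ => gsfppPmf n t α l m) ∧
      ∑' m : ℕ, gsfppPmf n t α l m = 1 := by
  have hα0 (i : Fin n) : 0 < α ((i : ℕ) + 1) := (hα _ (Nat.le_add_left 1 i) i.isLt).1
  have hα1 (i : Fin n) : α ((i : ℕ) + 1) ≤ 1 := (hα _ (Nat.le_add_left 1 i) i.isLt).2.le
  have hrows := summable_abs_gsfppTerm_and_tsum_le t (fun i => (hα0 i).le) hα1 l
  obtain ⟨hsum, hcomm⟩ := summable_tsum_and_tsum_comm_of_summable_abs (fun r => (hrows r).1)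
    ((Real.summable_pow_div_factorial _).of_nonneg_of_le
      (fun _ => tsum_nonneg fun _ => abs_nonneg _) fun r => (hrows r).2)
  simp only [gsfppPmf_eq_tsum_gsfppTerm]
  refine ⟨hsum, ?_⟩
  rw [hcomm, tsum_congr fun r => (hasSum_gsfppTerm t hα0 l r).tsum_eq, tsum_ite_eq]

/-- the pmf `(a_m)` of the GSFPP-VO is summable and sums to one. -/
theorem gsfppvo_pmf_sums_to_one
    (n : ℕ) (hn : 1 ≤ n) (t : ℕ → ℝ)
    (ht0 : t 0 = 0) (htmono : ∀ k < n, t k < t (k + 1))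
    (α : ℕ → ℝ) (hα : ∀ k, 1 ≤ k → k ≤ n → α k ∈ Set.Ioo (0 : ℝ) 1)
    (l : ℝ) (hl : 0 < l) :
    Summable (fun m : ℕ => gsfppPmf n t α l m) ∧
      ∑' m : ℕ, gsfppPmf n t α l m = 1 :=
  gsfppvo_pmf_sums_to_one_general n t α hα l
end

section
/- For every real θ < 0, the series ∑_{m=0}^∞ e^{θ m} a_m converges and ∑_{m=0}^∞ e^{θ m} a_m = ∏_{k=1}^n exp(−λ^{α_k}(1−e^{θ})^{α_k}(t_k − t_{k−1})). (Moment generating function of the GSFPP-VO.) -/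
open Finset Function

theorem fallingFactorial_eq_eval_descPochhammer (b : ℝ) (m : ℕ) :
    fallingFactorial b m = (descPochhammer ℝ m).eval b := by
  induction m with
  | zero => simp [fallingFactorial]
  | succ m ih => rw [fallingFactorial, ih, descPochhammer_succ_eval]

namespace Real

theorem choose_eq_eval_descPochhammer_div (b : ℝ) (m : ℕ) :
    Ring.choose b m = (descPochhammer ℝ m).eval b / m.factorial := by
  rw [Ring.choose_eq_smul, smul_eq_mul, div_eq_inv_mul,
    Polynomial.descPochhammer_smeval_eq_ascPochhammer, Polynomial.ascPochhammer_smeval_eq_eval,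
    descPochhammer_eval_eq_ascPochhammer]

theorem multichoose_eq_eval_ascPochhammer_div (b : ℝ) (m : ℕ) :
    Ring.multichoose b m = (ascPochhammer ℝ m).eval b / m.factorial := by
  rw [eq_div_iff (by positivity), mul_comm, ← nsmul_eq_mul,
    Ring.factorial_nsmul_multichoose_eq_ascPochhammer, Polynomial.ascPochhammer_smeval_eq_eval]

theorem abs_eval_descPochhammer_le {s : ℝ} (hs : 0 ≤ s) (m : ℕ) :
    |(descPochhammer ℝ m).eval s| ≤ (ascPochhammer ℝ m).eval s := by
  induction m with
  | zero => simp
  | succ m ih =>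
    rw [descPochhammer_succ_eval, ascPochhammer_succ_eval, abs_mul]
    exact mul_le_mul ih (abs_le.2 ⟨by linarith, by linarith [m.cast_nonneg (α := ℝ)]⟩)
      (abs_nonneg _) ((abs_nonneg _).trans ih)

theorem abs_choose_le_multichoose {s : ℝ} (hs : 0 ≤ s) (m : ℕ) :
    |Ring.choose s m| ≤ Ring.multichoose s m := by
  rw [choose_eq_eval_descPochhammer_div, multichoose_eq_eval_ascPochhammer_div, abs_div,
    Nat.abs_cast]
  exact div_le_div_of_nonneg_right (abs_eval_descPochhammer_le hs m) (by positivity)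

theorem hasSum_choose_mul_pow (s : ℝ) {x : ℝ} (hx : |x| < 1) :
    HasSum (fun m : ℕ => Ring.choose s m * x ^ m) ((1 + x) ^ s) := by
  have h := (one_add_rpow_hasFPowerSeriesOnBall_zero (a := s)).hasSum (y := x)
    (by simpa [enorm_eq_nnnorm, ← NNReal.coe_lt_coe] using hx)
  simpa [binomialSeries, FormalMultilinearSeries.ofScalars_apply_eq, mul_comm] using h

theorem hasSum_multichoose_mul_pow (s : ℝ) {x : ℝ} (hx : |x| < 1) :
    HasSum (fun m : ℕ => Ring.multichoose s m * x ^ m) (((1 - x) ^ s)⁻¹) := by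
  have h := (one_div_one_sub_rpow_hasFPowerSeriesOnBall_zero s).hasSum (y := x)
    (by simpa [enorm_eq_nnnorm, ← NNReal.coe_lt_coe] using hx)
  simpa [Ring.multichoose_eq, FormalMultilinearSeries.ofScalars_apply_eq, mul_comm] using h

theorem rpow_sum_mul_natCast {c : ℝ} (hc : 0 < c) {ι : Type*} (s : Finset ι) (a : ι → ℝ)
    (x : ι → ℕ) : c ^ (∑ i ∈ s, a i * (x i : ℝ)) = ∏ i ∈ s, (c ^ a i) ^ x i := by
  rw [rpow_sum_of_pos hc]
  exact prod_congr rfl fun i _ => by rw [rpow_mul hc.le, rpow_natCast]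

end Real

theorem fallingFactorial_div_factorial (b : ℝ) (m : ℕ) :
    fallingFactorial b m / m.factorial = Ring.choose b m := by
  rw [fallingFactorial_eq_eval_descPochhammer, Real.choose_eq_eval_descPochhammer_div]

section MultinomialSum

variable {n : ℕ} (a Δ : Fin n → ℝ) (r : ℕ)

noncomputable def multinomialSum (f : ℝ → ℝ) : ℝ :=
  ∑ x ∈ Nat.antidiagonalTuple n r,
    ((r.factorial : ℝ) / ∏ i, ((x i).factorial : ℝ)) * f (∑ i, a i * (x i : ℝ)) *
      ∏ i, Δ i ^ x i

theorem sum_pow_eq_sum_antidiagonalTuple {K : Type*} [Field K] [CharZero K] (f : Fin n → K) :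
    (∑ i, f i) ^ r = ∑ x ∈ Nat.antidiagonalTuple n r,
      ((r.factorial : K) / ∏ i, ((x i).factorial : K)) * ∏ i, f i ^ x i := by
  classical
  rw [sum_pow_eq_sum_piAntidiag, piAntidiag_univ_fin_eq_antidiagonalTuple]
  refine sum_congr rfl fun x hx => ?_
  have hmultinomial : (∏ i, ((x i).factorial : K)) * Nat.multinomial univ x = r.factorial := by
    rw [← Nat.mem_antidiagonalTuple.mp hx]
    exact_mod_cast Nat.multinomial_spec univ x
  have hprod : (∏ i, ((x i).factorial : K)) ≠ 0 :=
    prod_ne_zero_iff.2 fun i _ => Nat.cast_ne_zero.2 (x i).factorial_ne_zero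
  rw [← hmultinomial, mul_div_cancel_left₀ _ hprod]

theorem multinomialSum_rpow {c : ℝ} (hc : 0 < c) :
    multinomialSum a Δ r (c ^ ·) = (∑ i, c ^ a i * Δ i) ^ r := by
  rw [sum_pow_eq_sum_antidiagonalTuple, multinomialSum]
  refine sum_congr rfl fun _ _ => ?_
  simp only [Real.rpow_sum_mul_natCast hc, mul_pow, prod_mul_distrib, mul_assoc]

theorem hasSum_multinomialSum {F : ℕ → ℝ → ℝ} {G : ℝ → ℝ} (hF : ∀ s, HasSum (F · s) (G s)) :
    HasSum (fun m => multinomialSum a Δ r (F m)) (multinomialSum a Δ r G) :=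
  hasSum_sum fun _ _ => ((hF _).mul_left _).mul_right _

variable {a}

theorem abs_multinomialSum_le (ha : ∀ i, 0 ≤ a i) {f g : ℝ → ℝ}
    (hfg : ∀ s, 0 ≤ s → |f s| ≤ g s) :
    |multinomialSum a Δ r f| ≤ multinomialSum a (|Δ ·|) r g := by
  refine (abs_sum_le_sum_abs _ _).trans (sum_le_sum fun x _ => ?_)
  have hs : 0 ≤ ∑ i, a i * (x i : ℝ) := sum_nonneg fun i _ => mul_nonneg (ha i) (by positivity)
  rw [abs_mul, abs_mul, abs_of_nonneg (by positivity), abs_prod]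
  simp only [abs_pow]
  gcongr
  exact hfg _ hs

end MultinomialSum

section GeneratingFunction

/-- The `(m, r)` term of `u^m a_m` expanded as a series in `r` (see `pow_mul_gsfppPmf`). -/
noncomputable def pgfTerm {n : ℕ} (a Δ : Fin n → ℝ) (l u : ℝ) (m r : ℕ) : ℝ :=
  (-1) ^ r / r.factorial * multinomialSum a Δ r fun s => l ^ s * (Ring.choose s m * (-u) ^ m)

variable {n : ℕ} {a : Fin n → ℝ} (Δ : Fin n → ℝ) {l u : ℝ}

theorem abs_pgfTerm_le (ha : ∀ i, 0 ≤ a i) (hl : 0 ≤ l) (m r : ℕ) :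
    |pgfTerm a Δ l u m r| ≤
      multinomialSum a (|Δ ·|) r (fun s => l ^ s * (Ring.multichoose s m * |u| ^ m)) /
        r.factorial := by
  rw [pgfTerm, abs_mul, abs_div, abs_pow, abs_neg, abs_one, one_pow, Nat.abs_cast,
    one_div_mul_eq_div]
  gcongr
  refine abs_multinomialSum_le Δ r ha fun s hs => ?_
  rw [abs_mul, abs_mul, abs_of_nonneg (Real.rpow_nonneg hl s), abs_pow, abs_neg]
  gcongr
  exact Real.abs_choose_le_multichoose hs m

theorem hasSum_pgfTerm_majorant (hl : 0 < l) (hu : |u| < 1) (r : ℕ) :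
    HasSum (fun m => multinomialSum a Δ r (fun s => l ^ s * (Ring.multichoose s m * |u| ^ m)) /
        r.factorial) ((∑ i, (l / (1 - |u|)) ^ a i * Δ i) ^ r / r.factorial) := by
  have h1u : 0 < 1 - |u| := by linarith
  have hvalue : multinomialSum a Δ r (fun s => l ^ s * ((1 - |u|) ^ s)⁻¹) =
      (∑ i, (l / (1 - |u|)) ^ a i * Δ i) ^ r := by
    rw [← multinomialSum_rpow a Δ r (div_pos hl h1u)]
    simp only [Real.div_rpow hl.le h1u.le, ← div_eq_mul_inv]
  rw [← hvalue]
  exact (hasSum_multinomialSum a Δ r fun s =>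
    (Real.hasSum_multichoose_mul_pow s (by rwa [abs_abs])).mul_left (l ^ s)).div_const _

theorem summable_pgfTerm (ha : ∀ i, 0 ≤ a i) (hl : 0 < l) (hu : |u| < 1) :
    Summable (uncurry (pgfTerm a Δ l u)) := by
  have hmajorant := hasSum_pgfTerm_majorant (a := a) (fun i => |Δ i|) hl hu
  have hnonneg : ∀ m r, 0 ≤ multinomialSum a (|Δ ·|) r
      (fun s => l ^ s * (Ring.multichoose s m * |u| ^ m)) / r.factorial := fun m r =>
    (abs_nonneg _).trans (abs_pgfTerm_le Δ ha hl.le m r)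
  have hsummable : Summable fun p : ℕ × ℕ => multinomialSum a (|Δ ·|) p.1
      (fun s => l ^ s * (Ring.multichoose s p.2 * |u| ^ p.2)) / p.1.factorial := by
    refine (summable_prod_of_nonneg fun p => hnonneg p.2 p.1).2
      ⟨fun r => (hmajorant r).summable, ?_⟩
    simpa only [(hmajorant _).tsum_eq] using Real.summable_pow_div_factorial _
  exact hsummable.prod_symm.of_norm_bounded fun p => abs_pgfTerm_le Δ ha hl.le p.1 p.2

theorem hasSum_pgfTerm_fiber (hl : 0 < l) (hu : |u| < 1) (r : ℕ) :
    HasSum (fun m => pgfTerm a Δ l u m r)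
      ((-∑ i, (l * (1 - u)) ^ a i * Δ i) ^ r / r.factorial) := by
  have h1u : 0 < 1 - u := by linarith [le_abs_self u]
  have hvalue : multinomialSum a Δ r (fun s => l ^ s * (1 - u) ^ s) =
      (∑ i, (l * (1 - u)) ^ a i * Δ i) ^ r := by
    rw [← multinomialSum_rpow a Δ r (mul_pos hl h1u)]
    simp only [Real.mul_rpow hl.le h1u.le]
  have hseries := (hasSum_multinomialSum a Δ r fun s =>
    (Real.hasSum_choose_mul_pow s (by rwa [abs_neg])).mul_left (l ^ s)).mul_left
      ((-1 : ℝ) ^ r / r.factorial)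
  rw [← sub_eq_add_neg, hvalue] at hseries
  rw [neg_pow, mul_div_right_comm]
  exact hseries

theorem hasSum_tsum_pgfTerm (ha : ∀ i, 0 ≤ a i) (hl : 0 < l) (hu : |u| < 1) :
    HasSum (fun m => ∑' r, pgfTerm a Δ l u m r)
      (Real.exp (-∑ i, (l * (1 - u)) ^ a i * Δ i)) := by
  have hsummable := summable_pgfTerm Δ ha hl hu
  refine hsummable.prod.hasSum_iff.2 ?_
  simp only [uncurry_apply_pair]
  rw [← hsummable.tsum_comm, Real.exp_eq_exp_ℝ, NormedSpace.exp_eq_tsum_div]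
  exact tsum_congr fun r => (hasSum_pgfTerm_fiber Δ hl hu r).tsum_eq

end GeneratingFunction

theorem prod_Icc_one_eq_prod_fin {M : Type*} [CommMonoid M] (f : ℕ → M) (n : ℕ) :
    ∏ k ∈ Icc 1 n, f k = ∏ i : Fin n, f (i + 1) := by
  rw [Fin.prod_univ_eq_prod_range (fun i => f (i + 1)), ← Ico_add_one_right_eq_Icc,
    prod_Ico_eq_prod_range]
  simp [add_comm]

theorem pow_mul_gsfppPmf (n : ℕ) (t α : ℕ → ℝ) (l u : ℝ) (m : ℕ) :
    u ^ m * gsfppPmf n t α l m =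
      ∑' r, pgfTerm (fun i : Fin n => α (i + 1)) (fun i => t (i + 1) - t i) l u m r := by
  rw [gsfppPmf, ← mul_assoc, ← tsum_mul_left]
  refine tsum_congr fun r => ?_
  rw [pgfTerm, multinomialSum, mul_sum, mul_sum, mul_sum]
  refine sum_congr rfl fun x _ => ?_
  rw [← fallingFactorial_div_factorial, neg_pow]
  ring

theorem gsfppvo_mgf_general
    (n : ℕ) (t : ℕ → ℝ)
    (α : ℕ → ℝ) (hα : ∀ k, 1 ≤ k → k ≤ n → α k ∈ Set.Ioo (0 : ℝ) 1)
    (l : ℝ) (hl : 0 < l)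
    (θ : ℝ) (hθ : θ < 0) :
    Summable (fun m : ℕ => Real.exp (θ * m) * gsfppPmf n t α l m) ∧
      ∑' m : ℕ, Real.exp (θ * m) * gsfppPmf n t α l m
        = ∏ k ∈ Finset.Icc 1 n,
            Real.exp (-(l ^ α k * (1 - Real.exp θ) ^ α k * (t k - t (k - 1)))) := by
  have hu : |Real.exp θ| < 1 := by
    rw [abs_of_pos (Real.exp_pos θ)]
    exact Real.exp_lt_one_iff.2 hθ
  have ha : ∀ i : Fin n, 0 ≤ α (i + 1) := fun i => (hα _ (by omega) i.isLt).1.le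
  have hsum := hasSum_tsum_pgfTerm (fun i : Fin n => t (i + 1) - t i) ha hl hu
  simp only [← pow_mul_gsfppPmf] at hsum
  simp only [mul_comm θ, Real.exp_nat_mul]
  refine ⟨hsum.summable, hsum.tsum_eq.trans ?_⟩
  rw [prod_Icc_one_eq_prod_fin, ← sum_neg_distrib, Real.exp_sum]
  refine prod_congr rfl fun i _ => ?_
  rw [Real.mul_rpow hl.le (by linarith [abs_lt.1 hu]), Nat.add_sub_cancel]

/-- for every `θ < 0`, `∑_m e^{θ m} a_m` converges and equals
`∏_{k=1}^n exp(−λ^{α_k}(1−e^{θ})^{α_k}(t_k − t_{k−1}))`.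
(Moment generating function of the GSFPP-VO.) -/
theorem gsfppvo_mgf
    (n : ℕ) (hn : 1 ≤ n) (t : ℕ → ℝ)
    (ht0 : t 0 = 0) (htmono : ∀ k < n, t k < t (k + 1))
    (α : ℕ → ℝ) (hα : ∀ k, 1 ≤ k → k ≤ n → α k ∈ Set.Ioo (0 : ℝ) 1)
    (l : ℝ) (hl : 0 < l)
    (θ : ℝ) (hθ : θ < 0) :
    Summable (fun m : ℕ => Real.exp (θ * m) * gsfppPmf n t α l m) ∧
      ∑' m : ℕ, Real.exp (θ * m) * gsfppPmf n t α l m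
        = ∏ k ∈ Finset.Icc 1 n,
            Real.exp (-(l ^ α k * (1 - Real.exp θ) ^ α k * (t k - t (k - 1)))) :=
  gsfppvo_mgf_general n t α hα l hl θ hθ
end

section
/- For t ∈ (t_{n−1}, t_n), let a_m(t) denote the coefficient a_m computed for the partition 0 = t_0 < t_1 < ⋯ < t_{n−1} < t (i.e., with t_n replaced by t). Then for each m ∈ ℕ, the function t ↦ a_m(t) is differentiable on (t_{n−1}, t_n) and satisfies the fractional difference-differential equation d/dt a_m(t) = −λ^{α_n} ∑_{r=0}^m ((−1)^r / r!) (Γ(α_n+1)/Γ(α_n+1−r)) a_{m−r}(t), where Γ is the real Gamma function. -/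
/-!
Collecting the inner multinomial sums by multi-index,
`a_m = (-1)^m / m! · ∑ₓ w_m(x) ∏ᵢ (-cᵢ)^{xᵢ} / xᵢ!` with increments `cᵢ = tᵢ - tᵢ₋₁` and weight
`w_m(x) = λ^s (s)_m`, `s = ∑ᵢ αᵢ xᵢ`. The weight grows at most exponentially in `|x|`, so the
series is entire in the last increment `t - t_{n-1}` and can be differentiated termwise;
`d/dcₙ` shifts `x ↦ x + eₙ` with a minus sign, i.e. `s ↦ s + αₙ`. Chu–Vandermonde splits
`(s + αₙ)_m = ∑_r C(m,r) (αₙ)_r (s)_{m-r}`, and `(αₙ)_r = Γ(αₙ + 1) / Γ(αₙ + 1 - r)` since `αₙ`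
is not an integer.
-/

open Finset Real Function

open scoped Nat

open Polynomial in
lemma fallingFactorial_eq_smeval (b : ℝ) (m : ℕ) :
    fallingFactorial b m = (descPochhammer ℤ m).smeval b := by
  induction m with
  | zero => simp [fallingFactorial]
  | succ m ih =>
    rw [fallingFactorial, ih, descPochhammer_succ_right, smeval_mul, smeval_sub, smeval_X,
      smeval_natCast]
    simp

lemma fallingFactorial_add (a b : ℝ) (m : ℕ) :
    fallingFactorial (a + b) m =
      ∑ j ∈ range (m + 1),
        (m.choose j : ℝ) * fallingFactorial a j * fallingFactorial b (m - j) := by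
  simp only [fallingFactorial_eq_smeval, Ring.descPochhammer_smeval_add m (Commute.all a b),
    Nat.sum_antidiagonal_eq_sum_range_succ (fun i j => (m.choose i : ℝ) *
      ((descPochhammer ℤ i).smeval a * (descPochhammer ℤ j).smeval b)), mul_assoc]

lemma abs_fallingFactorial_le (b : ℝ) (m : ℕ) : |fallingFactorial b m| ≤ (|b| + m) ^ m := by
  induction m with
  | zero => simp [fallingFactorial]
  | succ m ih =>
    rw [fallingFactorial, abs_mul, pow_succ]
    have hm : (m : ℝ) ≤ (m + 1 : ℕ) := by push_cast; linarith
    gcongr ?_ * ?_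
    · exact ih.trans (by gcongr)
    · exact (abs_sub _ _).trans (by rw [Nat.abs_cast]; gcongr)

lemma Gamma_add_one_eq_fallingFactorial_mul {a : ℝ} (ha : ∀ k : ℤ, a ≠ k) (r : ℕ) :
    Gamma (a + 1) = fallingFactorial a r * Gamma (a + 1 - r) := by
  induction r with
  | zero => simp [fallingFactorial]
  | succ r ih =>
    have hr : a - r ≠ 0 := sub_ne_zero.mpr (by exact_mod_cast ha r)
    rw [ih, fallingFactorial, show a + 1 - r = a - r + 1 by ring, Gamma_add_one hr]
    push_cast
    ring_nf

lemma Gamma_add_one_div_Gamma_sub {a : ℝ} (ha : ∀ k : ℤ, a ≠ k) (r : ℕ) :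
    Gamma (a + 1) / Gamma (a + 1 - r) = fallingFactorial a r := by
  have hpole : Gamma (a + 1 - r) ≠ 0 := Gamma_ne_zero fun k h =>
    ha (r - 1 - k) (by push_cast; linarith)
  rw [Gamma_add_one_eq_fallingFactorial_mul ha r, mul_div_cancel_right₀ _ hpole]

section MultiExpSeries

variable {n : ℕ}

noncomputable def multiExpTerm (g : (Fin n → ℕ) → ℝ) (c : Fin n → ℝ) (r : ℕ) : ℝ :=
  ∑ x ∈ Nat.antidiagonalTuple n r, g x * ∏ i, c i ^ x i / (x i)!

/-- `multiExpSeries g c = ∑ₓ g x ∏ᵢ (-cᵢ) ^ xᵢ / xᵢ!`, summed by total degree. -/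
noncomputable def multiExpSeries (g : (Fin n → ℕ) → ℝ) (c : Fin n → ℝ) : ℝ :=
  ∑' r, (-1) ^ r * multiExpTerm g c r

lemma sum_antidiagonalTuple_prod_pow_div_factorial (c : Fin n → ℝ) (r : ℕ) :
    ∑ x ∈ Nat.antidiagonalTuple n r, ∏ i, c i ^ x i / (x i)! = (∑ i, c i) ^ r / r ! := by
  rw [sum_pow_eq_sum_piAntidiag, piAntidiag_univ_fin_eq_antidiagonalTuple, sum_div]
  refine sum_congr rfl fun x hx => ?_
  have hspec := Nat.multinomial_spec univ x
  rw [Nat.mem_antidiagonalTuple.mp hx] at hspec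
  have hfact : (∏ i, ((x i)! : ℝ)) ≠ 0 := prod_ne_zero_iff.mpr fun i _ => by positivity
  have hmult : (Nat.multinomial univ x : ℝ) ≠ 0 := by
    exact_mod_cast (Nat.multinomial_pos _ _).ne'
  rw [prod_div_distrib, ← hspec]
  push_cast
  field_simp

lemma abs_multiExpTerm_le {g : (Fin n → ℕ) → ℝ} {B : ℝ} {r : ℕ}
    (hg : ∀ x ∈ Nat.antidiagonalTuple n r, |g x| ≤ B) (c : Fin n → ℝ) :
    |multiExpTerm g c r| ≤ B * (∑ i, |c i|) ^ r / r ! := by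
  rw [mul_div_assoc, ← sum_antidiagonalTuple_prod_pow_div_factorial, mul_sum]
  refine (abs_sum_le_sum_abs _ _).trans (sum_le_sum fun x hx => ?_)
  rw [abs_mul, abs_prod]
  simp only [abs_div, abs_pow, Nat.abs_cast]
  exact mul_le_mul_of_nonneg_right (hg x hx) (by positivity)

lemma abs_multiExpTerm_le_of_growth {g : (Fin n → ℕ) → ℝ} {C D : ℝ}
    (hg : ∀ x, |g x| ≤ C * D ^ ∑ i, x i) (c : Fin n → ℝ) (r : ℕ) :
    |multiExpTerm g c r| ≤ C * D ^ r * (∑ i, |c i|) ^ r / r ! :=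
  abs_multiExpTerm_le (fun x hx => Nat.mem_antidiagonalTuple.mp hx ▸ hg x) c

lemma summable_multiExpTerm {g : (Fin n → ℕ) → ℝ} {C D : ℝ}
    (hg : ∀ x, |g x| ≤ C * D ^ ∑ i, x i) (c : Fin n → ℝ) :
    Summable fun r => (-1) ^ r * multiExpTerm g c r := by
  refine .of_norm_bounded ((Real.summable_pow_div_factorial (D * ∑ i, |c i|)).mul_left C)
    fun r => ?_
  rw [norm_mul, norm_pow, norm_neg, norm_one, one_pow, one_mul, Real.norm_eq_abs, mul_pow,
    ← mul_div_assoc, ← mul_assoc]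
  exact abs_multiExpTerm_le_of_growth hg c r

lemma multiExpSeries_sum {ι : Type*} (s : Finset ι) (a : ι → ℝ)
    {g : ι → (Fin n → ℕ) → ℝ} {C : ι → ℝ} {D : ℝ}
    (hg : ∀ j ∈ s, ∀ x, |g j x| ≤ C j * D ^ ∑ i, x i) (c : Fin n → ℝ) :
    multiExpSeries (fun x => ∑ j ∈ s, a j * g j x) c =
      ∑ j ∈ s, a j * multiExpSeries (g j) c := by
  have hterm : ∀ r, (-1) ^ r * multiExpTerm (fun x => ∑ j ∈ s, a j * g j x) c r =
      ∑ j ∈ s, a j * ((-1) ^ r * multiExpTerm (g j) c r) := by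
    intro r
    simp only [multiExpTerm, sum_mul, mul_sum]
    rw [sum_comm]
    exact sum_congr rfl fun _ _ => sum_congr rfl fun _ _ => by ring
  simp only [multiExpSeries, hterm]
  rw [Summable.tsum_finsetSum fun j hj => (summable_multiExpTerm (hg j hj) c).mul_left (a j)]
  exact sum_congr rfl fun j _ => tsum_mul_left

lemma hasDerivAt_pow_succ_div_factorial (k : ℕ) (y : ℝ) :
    HasDerivAt (fun z : ℝ => z ^ (k + 1) / (k + 1)!) (y ^ k / k !) y := by
  refine ((hasDerivAt_pow (k + 1) y).div_const ((k + 1)! : ℝ)).congr_deriv ?_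
  rw [Nat.factorial_succ]
  push_cast
  field_simp

lemma prod_update_pow_div_factorial (c : Fin n → ℝ) (i : Fin n) (z : ℝ) (x : Fin n → ℕ) :
    ∏ j, update c i z j ^ x j / (x j)! =
      z ^ x i / (x i)! * ∏ j ∈ univ.erase i, c j ^ x j / (x j)! := by
  rw [← mul_prod_erase univ _ (mem_univ i), update_self]
  congr 1
  exact prod_congr rfl fun j hj => by rw [update_of_ne (ne_of_mem_erase hj)]

lemma prod_update_pow_div_factorial_of_eq_zero (c : Fin n → ℝ) {i : Fin n} (z : ℝ)
    {x : Fin n → ℕ} (hx : x i = 0) :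
    ∏ j, update c i z j ^ x j / (x j)! = ∏ j, c j ^ x j / (x j)! := by
  rw [prod_update_pow_div_factorial, ← update_eq_self i c, prod_update_pow_div_factorial, hx]
  simp

lemma hasDerivAt_prod_update_pow_div_factorial (c : Fin n → ℝ) (i : Fin n) (x : Fin n → ℕ)
    (y : ℝ) :
    HasDerivAt (fun z => ∏ j,
        update c i z j ^ (x + Pi.single i 1 : Fin n → ℕ) j / ((x + Pi.single i 1 : Fin n → ℕ) j)!)
      (∏ j, update c i y j ^ x j / (x j)!) y := by
  have herase : ∏ j ∈ univ.erase i,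
      c j ^ (x + Pi.single i 1 : Fin n → ℕ) j / ((x + Pi.single i 1 : Fin n → ℕ) j)! =
        ∏ j ∈ univ.erase i, c j ^ x j / (x j)! :=
    prod_congr rfl fun j hj => by simp [ne_of_mem_erase hj]
  simp only [prod_update_pow_div_factorial]
  rw [herase]
  simp only [Pi.add_apply, Pi.single_eq_same]
  exact (hasDerivAt_pow_succ_div_factorial (x i) y).mul_const _

lemma sum_add_single_one (x : Fin n → ℕ) (i : Fin n) :
    ∑ j, (x + Pi.single i 1 : Fin n → ℕ) j = ∑ j, x j + 1 := by
  simp [sum_add_distrib]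

lemma sum_antidiagonalTuple_succ {M : Type*} [AddCommMonoid M] (i : Fin n)
    (f : (Fin n → ℕ) → M) (r : ℕ) :
    ∑ x ∈ Nat.antidiagonalTuple n (r + 1), f x =
      ∑ x ∈ Nat.antidiagonalTuple n (r + 1) with x i = 0, f x +
        ∑ x ∈ Nat.antidiagonalTuple n r, f (x + Pi.single i 1) := by
  have hcancel (x : Fin n → ℕ) (hx : x i ≠ 0) : x - Pi.single i 1 + Pi.single i 1 = x := by
    ext j
    by_cases hj : j = i
    · subst hj
      simp only [Pi.add_apply, Pi.sub_apply, Pi.single_eq_same]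
      omega
    · simp [hj]
  rw [← sum_filter_add_sum_filter_not _ (fun x => x i = 0)]
  congr 1
  symm
  refine sum_nbij' (· + Pi.single i 1) (· - Pi.single i 1) (fun x hx => ?_) (fun x hx => ?_)
    (fun x _ => by ext; simp) (fun x hx => hcancel x (mem_filter.mp hx).2) fun _ _ => rfl
  · simp only [mem_filter, Nat.mem_antidiagonalTuple] at hx ⊢
    exact ⟨by rw [sum_add_single_one, hx], by simp⟩
  · simp only [mem_filter, Nat.mem_antidiagonalTuple] at hx ⊢
    have := sum_add_single_one (x - Pi.single i 1) i
    rw [hcancel x hx.2] at this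
    omega

lemma hasDerivAt_multiExpTerm_update (g : (Fin n → ℕ) → ℝ) (c : Fin n → ℝ) (i : Fin n)
    (r : ℕ) (y : ℝ) :
    HasDerivAt (fun z => multiExpTerm g (update c i z) (r + 1))
      (multiExpTerm (fun x => g (x + Pi.single i 1)) (update c i y) r) y := by
  have hconst (z : ℝ) :
      ∑ x ∈ Nat.antidiagonalTuple n (r + 1) with x i = 0,
          g x * ∏ j, update c i z j ^ x j / (x j)! =
        ∑ x ∈ Nat.antidiagonalTuple n (r + 1) with x i = 0,
          g x * ∏ j, c j ^ x j / (x j)! :=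
    sum_congr rfl fun x hx => by
      rw [prod_update_pow_div_factorial_of_eq_zero c z (mem_filter.mp hx).2]
  simp only [multiExpTerm, sum_antidiagonalTuple_succ i _ r, hconst]
  refine (HasDerivAt.fun_sum fun x _ => ?_).const_add _
  exact (hasDerivAt_prod_update_pow_div_factorial c i x y).const_mul (g (x + Pi.single i 1))

lemma sum_abs_update_le (c : Fin n → ℝ) (i : Fin n) (z : ℝ) :
    ∑ j, |update c i z j| ≤ ∑ j, |c j| + n * |z| := by
  calc ∑ j, |update c i z j| ≤ ∑ j, (|c j| + |z|) := by
        refine sum_le_sum fun j _ => ?_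
        by_cases hj : j = i
        · subst hj; simp only [update_self]; linarith [abs_nonneg (c j)]
        · rw [update_of_ne hj]; linarith [abs_nonneg z]
    _ = ∑ j, |c j| + n * |z| := by simp [sum_add_distrib]

lemma hasDerivAt_multiExpSeries_update {g : (Fin n → ℕ) → ℝ} {C D : ℝ} (hD : 0 ≤ D)
    (hg : ∀ x, |g x| ≤ C * D ^ ∑ i, x i) (c : Fin n → ℝ) (i : Fin n) (y : ℝ) :
    HasDerivAt (fun z => multiExpSeries g (update c i z))
      (-multiExpSeries (fun x => g (x + Pi.single i 1)) (update c i y)) y := by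
  have hC : 0 ≤ C := by simpa using (abs_nonneg _).trans (hg 0)
  have hshift (x : Fin n → ℕ) : |g (x + Pi.single i 1)| ≤ C * D * D ^ ∑ j, x j := by
    have := hg (x + Pi.single i 1)
    rwa [sum_add_single_one, pow_succ', ← mul_assoc] at this
  -- The degree-0 term is constant; after splitting it off, degree `r + 1` differentiates to the
  -- degree-`r` term of the shifted series.
  have hsplit (z : ℝ) : multiExpSeries g (update c i z) =
      g 0 + ∑' r, (-1) ^ (r + 1) * multiExpTerm g (update c i z) (r + 1) := by
    rw [multiExpSeries, (summable_multiExpTerm hg _).tsum_eq_zero_add]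
    simp [multiExpTerm, Finset.Nat.antidiagonalTuple_zero_right]
  set R := ∑ j, |c j| + n * (|y| + 1)
  have hR (z : ℝ) (hz : z ∈ Metric.ball y 1) : ∑ j, |update c i z j| ≤ R := by
    have hz' : |z| ≤ |y| + 1 := by
      have := abs_sub_abs_le_abs_sub z y
      rw [Metric.mem_ball, Real.dist_eq] at hz
      linarith
    exact (sum_abs_update_le c i z).trans (by simp only [R]; gcongr)
  have hderiv := hasDerivAt_tsum_of_isPreconnected
    (u := fun r => C * D * (D * R) ^ r / r !)
    (g := fun r z => (-1) ^ (r + 1) * multiExpTerm g (update c i z) (r + 1))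
    (g' := fun r z =>
      -((-1) ^ r * multiExpTerm (fun x => g (x + Pi.single i 1)) (update c i z) r))
    ((Real.summable_pow_div_factorial (D * R)).mul_left (C * D) |>.congr fun r => by ring)
    Metric.isOpen_ball (convex_ball y 1).isPreconnected
    (fun r z _ =>
      ((hasDerivAt_multiExpTerm_update g c i r z).const_mul ((-1) ^ (r + 1))).congr_deriv
        (by ring))
    (fun r z hz => by
      rw [norm_neg, norm_mul, norm_pow, norm_neg, norm_one, one_pow, one_mul, Real.norm_eq_abs]
      refine (abs_multiExpTerm_le_of_growth hshift _ r).trans ?_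
      rw [mul_pow, ← mul_assoc]
      gcongr
      exact hR z hz)
    (Metric.mem_ball_self one_pos)
    ((summable_multiExpTerm hg _).comp_injective (add_left_injective 1))
    (Metric.mem_ball_self one_pos)
  simp only [hsplit]
  exact (hderiv.const_add (g 0)).congr_deriv (by rw [tsum_neg, multiExpSeries])

end MultiExpSeries

section Gsfpp

variable {n : ℕ}

noncomputable def gsfppWeight (β : Fin n → ℝ) (l : ℝ) (m : ℕ) (x : Fin n → ℕ) : ℝ :=
  l ^ (∑ i, β i * x i) * fallingFactorial (∑ i, β i * x i) m

lemma gsfppPmf_eq_multiExpSeries (n : ℕ) (t α : ℕ → ℝ) (l : ℝ) (m : ℕ) :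
    gsfppPmf n t α l m = (-1) ^ m / m ! *
      multiExpSeries (gsfppWeight (fun i : Fin n => α (i + 1)) l m) (fun i => t (i + 1) - t i) := by
  unfold gsfppPmf multiExpSeries multiExpTerm gsfppWeight
  congr 1
  refine tsum_congr fun r => ?_
  rw [mul_sum, mul_sum]
  refine sum_congr rfl fun x _ => ?_
  have hfact : (∏ i, ((x i)! : ℝ)) ≠ 0 := prod_ne_zero_iff.mpr fun i _ => by positivity
  rw [prod_div_distrib]
  field_simp

lemma abs_gsfppWeight_le {β : Fin n → ℝ} (hβ : ∀ i, β i ∈ Set.Icc 0 1) (l : ℝ) (m : ℕ)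
    (x : Fin n → ℕ) :
    |gsfppWeight β l m x| ≤ m ! * exp m * (exp 1 * max 1 |l|) ^ ∑ i, x i := by
  set s := ∑ i, β i * x i
  set N := ∑ i, x i
  have hs0 : 0 ≤ s := sum_nonneg fun i _ => mul_nonneg (hβ i).1 (Nat.cast_nonneg _)
  have hsN : s ≤ N := by
    push_cast [N]
    exact sum_le_sum fun i _ => mul_le_of_le_one_left (Nat.cast_nonneg _) (hβ i).2
  have hpow : |l ^ s| ≤ max 1 |l| ^ N := by
    calc |l ^ s| ≤ |l| ^ s := abs_rpow_le_abs_rpow l s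
      _ ≤ max 1 |l| ^ s := rpow_le_rpow (abs_nonneg l) (le_max_right 1 |l|) hs0
      _ ≤ max 1 |l| ^ (N : ℝ) := rpow_le_rpow_of_exponent_le (le_max_left 1 |l|) hsN
      _ = max 1 |l| ^ N := rpow_natCast _ N
  have hff : |fallingFactorial s m| ≤ m ! * exp m * exp 1 ^ N := by
    calc |fallingFactorial s m| ≤ (|s| + m) ^ m := abs_fallingFactorial_le s m
      _ ≤ (N + m) ^ m := by rw [abs_of_nonneg hs0]; gcongr
      _ ≤ m ! * exp (N + m) := by
          rw [← div_le_iff₀' (by positivity)]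
          exact pow_div_factorial_le_exp _ (by positivity) m
      _ = m ! * exp m * exp 1 ^ N := by rw [exp_add, ← exp_nat_mul, mul_one]; ring
  rw [gsfppWeight, abs_mul, mul_pow]
  calc |l ^ s| * |fallingFactorial s m| ≤ max 1 |l| ^ N * (m ! * exp m * exp 1 ^ N) :=
        mul_le_mul hpow hff (abs_nonneg _) (by positivity)
    _ = _ := by ring

lemma gsfppWeight_add_single {l : ℝ} (hl : 0 < l) (β : Fin n → ℝ) (m : ℕ) (i : Fin n)
    (x : Fin n → ℕ) :
    gsfppWeight β l m (x + Pi.single i 1) = ∑ j ∈ range (m + 1),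
      l ^ β i * m.choose j * fallingFactorial (β i) j * gsfppWeight β l (m - j) x := by
  have hs : ∑ k, β k * ((x + Pi.single i 1 : Fin n → ℕ) k : ℝ) = β i + ∑ k, β k * x k := by
    simp [Pi.single_apply, mul_add, sum_add_distrib, add_comm]
  rw [gsfppWeight, hs, rpow_add hl, fallingFactorial_add, mul_sum]
  exact sum_congr rfl fun j _ => by rw [gsfppWeight]; ring

lemma increments_update_last (t : ℕ → ℝ) (k : ℕ) (y : ℝ) :
    (fun i : Fin (k + 1) => update t (k + 1) y (i + 1) - update t (k + 1) y i) =
      update (fun i : Fin (k + 1) => t (i + 1) - t i) (Fin.last k) (y - t k) := by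
  funext i
  rcases Fin.eq_castSucc_or_eq_last i with ⟨j, rfl⟩ | rfl
  · have hj := j.isLt
    rw [update_of_ne (Fin.castSucc_ne_last j), update_of_ne (by simp; omega),
      update_of_ne (by simp; omega)]
  · simp

lemma neg_one_pow_div_factorial_mul_choose {m j : ℕ} (h : j ≤ m) :
    (-1 : ℝ) ^ m / m ! * m.choose j = (-1) ^ j / j ! * ((-1) ^ (m - j) / (m - j)!) := by
  rw [Nat.cast_choose ℝ h, div_mul_div_comm ((-1 : ℝ) ^ j), ← pow_add, Nat.add_sub_cancel' h]
  field_simp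

end Gsfpp

theorem gsfppvo_pmf_fractional_ode_general
    (n : ℕ) (hn : 1 ≤ n) (t : ℕ → ℝ)
    (α : ℕ → ℝ) (hα : ∀ k, 1 ≤ k → k ≤ n → α k ∈ Set.Ioo (0 : ℝ) 1)
    (l : ℝ) (hl : 0 < l) :
    ∀ m : ℕ, ∀ x ∈ Set.Ioo (t (n - 1)) (t n),
      HasDerivAt (fun y : ℝ => gsfppPmf n (Function.update t n y) α l m)
        (-(l ^ α n) * ∑ r ∈ Finset.range (m + 1),
          ((-1 : ℝ) ^ r / (r.factorial : ℝ)) *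
            (Real.Gamma (α n + 1) / Real.Gamma (α n + 1 - r)) *
            gsfppPmf n (Function.update t n x) α l (m - r)) x := by
  intro m x _
  obtain ⟨k, rfl⟩ : ∃ k, n = k + 1 := ⟨n - 1, by omega⟩
  set c : Fin (k + 1) → ℝ := fun i => t (i + 1) - t i
  have hweight (p : ℕ) := abs_gsfppWeight_le
    (fun i : Fin (k + 1) => Set.Ioo_subset_Icc_self (hα (i + 1) (by omega) (by omega))) l p
  have hαn (z : ℤ) : α (k + 1) ≠ z := fun hz => by
    have h := hα (k + 1) (by omega) le_rfl
    rw [hz] at h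
    have : (0 : ℤ) < z ∧ z < 1 := ⟨by exact_mod_cast h.1, by exact_mod_cast h.2⟩
    omega
  have hpmf (p : ℕ) (y : ℝ) : gsfppPmf (k + 1) (update t (k + 1) y) α l p = (-1) ^ p / p ! *
      multiExpSeries (gsfppWeight (fun i => α (i + 1)) l p) (update c (Fin.last k) (y - t k)) := by
    rw [gsfppPmf_eq_multiExpSeries, increments_update_last]
  simp only [hpmf]
  refine ((hasDerivAt_multiExpSeries_update (by positivity) (hweight m) c (Fin.last k)
    (x - t k)).comp_sub_const x (t k) |>.const_mul _).congr_deriv ?_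
  simp only [gsfppWeight_add_single hl]
  rw [multiExpSeries_sum _ _ (fun j _ => hweight (m - j)), mul_neg, mul_sum, ← sum_neg_distrib,
    mul_sum]
  refine sum_congr rfl fun j hj => ?_
  set E :=
    multiExpSeries (gsfppWeight (fun i => α (i + 1)) l (m - j)) (update c (Fin.last k) (x - t k))
  rw [Gamma_add_one_div_Gamma_sub hαn, Fin.val_last]
  linear_combination (-(l ^ α (k + 1)) * fallingFactorial (α (k + 1)) j * E) *
    neg_one_pow_div_factorial_mul_choose (Nat.lt_succ_iff.mp (mem_range.mp hj))

/-- for `t ∈ (t_{n−1}, t_n)` let `a_m(t)` be the pmf coefficient computed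
for the partition `0 = t_0 < t_1 < ⋯ < t_{n−1} < t` (that is, with `t_n` replaced by `t`).
Then `t ↦ a_m(t)` is differentiable on `(t_{n−1}, t_n)` and satisfies
`d/dt a_m(t) = −λ^{α_n} ∑_{r=0}^m ((−1)^r/r!) (Γ(α_n+1)/Γ(α_n+1−r)) a_{m−r}(t)`. -/
theorem gsfppvo_pmf_fractional_ode
    (n : ℕ) (hn : 1 ≤ n) (t : ℕ → ℝ)
    (ht0 : t 0 = 0) (htmono : ∀ k < n, t k < t (k + 1))
    (α : ℕ → ℝ) (hα : ∀ k, 1 ≤ k → k ≤ n → α k ∈ Set.Ioo (0 : ℝ) 1)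
    (l : ℝ) (hl : 0 < l) :
    ∀ m : ℕ, ∀ x ∈ Set.Ioo (t (n - 1)) (t n),
      HasDerivAt (fun y : ℝ => gsfppPmf n (Function.update t n y) α l m)
        (-(l ^ α n) * ∑ r ∈ Finset.range (m + 1),
          ((-1 : ℝ) ^ r / (r.factorial : ℝ)) *
            (Real.Gamma (α n + 1) / Real.Gamma (α n + 1 - r)) *
            gsfppPmf n (Function.update t n x) α l (m - r)) x :=
  gsfppvo_pmf_fractional_ode_general n hn t α hα l hl
end
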